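/- arXiv:2202.13832 — 4 statements merged into one kernel-verified Lean document; each statement's English description precedes it below -/
import Mathlib

section
/- Let η be a real number and let A = (a_{ij})_{1≤i,j≤3} be a real symmetric 3×3 matrix satisfying a_{22} + a_{33} = -(1+η)·a_{11}. Then Σ_{i,j=1}^{3} a_{ij}² ≥ min((η² + 2η + 3)/2, 2) · (a_{11}² + a_{12}² + a_{13}²). -/
theorem improved_kato_first (η : ℝ) (A : Matrix (Fin 3) (Fin 3) ℝ)
    (hsymm : A.IsSymm) (htrace : A 1 1 + A 2 2 = -(1 + η) * A 0 0) :
    ∑ i : Fin 3, ∑ j : Fin 3, (A i j) ^ 2 ≥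
      min ((η ^ 2 + 2 * η + 3) / 2) 2 * ((A 0 0) ^ 2 + (A 0 1) ^ 2 + (A 0 2) ^ 2) := by
  have h10 : A 1 0 = A 0 1 := (hsymm.apply 1 0).symm
  have h20 : A 2 0 = A 0 2 := (hsymm.apply 2 0).symm
  have h21 : A 2 1 = A 1 2 := (hsymm.apply 2 1).symm
  have h2 : (A 1 1 + A 2 2) ^ 2 = (1 + η) ^ 2 * A 0 0 ^ 2 := by rw [htrace]; ring
  simp only [Fin.sum_univ_three]
  rw [h10, h20, h21]
  rcases le_total ((η ^ 2 + 2 * η + 3) / 2) 2 with h | h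
  · rw [min_eq_left h]
    nlinarith [sq_nonneg (A 1 1 - A 2 2), sq_nonneg (A 1 2),
      mul_nonneg (by nlinarith : (0:ℝ) ≤ 2 - (1 + η) ^ 2)
        (add_nonneg (sq_nonneg (A 0 1)) (sq_nonneg (A 0 2)))]
  · rw [min_eq_right h]
    nlinarith [sq_nonneg (A 1 1 - A 2 2), sq_nonneg (A 1 2),
      (by nlinarith : (2:ℝ) ≤ (1 + η) ^ 2), sq_nonneg (A 0 0)]
end

section
/- Let 1 < p ≤ 2 and let η be a real number with p-2 ≤ η ≤ 0. Then -((1-η)/(4(3-p)))·(3-η)(η+1) - ((η+2-p)/(4(3-p)))·(1+η)² ≤ -((5-p)(p-1)/(4(3-p)²))·(1-η)² - ((η+2-p)/(4(3-p)))·(1+η)². Equivalently, (3-p)·(1-η)·(3-η)·(η+1) ≥ (5-p)(p-1)·(1-η)². -/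
theorem upsilon_bound (p η : ℝ) (hp1 : 1 < p) (hp2 : p ≤ 2)
    (hη1 : p - 2 ≤ η) (hη2 : η ≤ 0) :
    (-((1 - η) / (4 * (3 - p))) * ((3 - η) * (η + 1))
        - ((η + 2 - p) / (4 * (3 - p))) * (1 + η) ^ 2
      ≤ -((5 - p) * (p - 1) / (4 * (3 - p) ^ 2)) * (1 - η) ^ 2
        - ((η + 2 - p) / (4 * (3 - p))) * (1 + η) ^ 2)
    ∧ (3 - p) * (1 - η) * (3 - η) * (η + 1) ≥ (5 - p) * (p - 1) * (1 - η) ^ 2 := by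
  have h3p : (0:ℝ) < 3 - p := by linarith
  have key : (3 - p) * (1 - η) * (3 - η) * (η + 1) ≥ (5 - p) * (p - 1) * (1 - η) ^ 2 := by
    nlinarith [sq_nonneg (η + 2 - p), sq_nonneg (1 - η), sq_nonneg (η + 1), sq_nonneg (p - 2 - η),
      mul_nonneg (sub_nonneg.2 hη1) (neg_nonneg.2 hη2), sq_nonneg (2 - p), sq_nonneg η,
      mul_nonneg (mul_nonneg (sub_nonneg.2 hη1) (neg_nonneg.2 hη2)) (sub_nonneg.2 hp2)]
  refine ⟨?_, key⟩
  have h4 : (0:ℝ) < 4 * (3 - p) := by linarith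
  have h1 : -((1 - η) / (4 * (3 - p))) * ((3 - η) * (η + 1))
      ≤ -((5 - p) * (p - 1) / (4 * (3 - p) ^ 2)) * (1 - η) ^ 2 := by
    rw [neg_mul, neg_mul, neg_le_neg_iff, div_mul_eq_mul_div, div_mul_eq_mul_div,
      div_le_div_iff₀ (by positivity) (by positivity)]
    nlinarith [key]
  linarith
end

section
/- Let 1 < p ≤ 2, let η be a real number with p-2 ≤ η ≤ 0, and let A = (a_{ij})_{1≤i,j≤3} be a real symmetric 3×3 matrix satisfying a_{22} + a_{33} = -(1+η)·a_{11}. Write ‖A‖² = Σ_{i,j=1}^{3} a_{ij}² and Q = a_{11}² + a_{12}² + a_{13}². Then -((1-η)/(3-p) - 1/2)·‖A‖² + ((p-2-η)/(3-p))·Q - (η(η+2)/2)·a_{11}² + (η(1-η)(1+η)/(3-p))·a_{11}² ≤ [-((5-p)(p-1)/(4(3-p)²))·(1-η)² - ((η+2-p)/(4(3-p)))·(1+η)²]·a_{11}². -/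
theorem combined_pointwise_inequality (p η : ℝ) (hp1 : 1 < p) (hp2 : p ≤ 2)
    (hη1 : p - 2 ≤ η) (hη2 : η ≤ 0)
    (A : Matrix (Fin 3) (Fin 3) ℝ) (hsymm : A.IsSymm)
    (htrace : A 1 1 + A 2 2 = -(1 + η) * A 0 0) :
    -((1 - η) / (3 - p) - 1 / 2) * (∑ i : Fin 3, ∑ j : Fin 3, (A i j) ^ 2)
      + ((p - 2 - η) / (3 - p)) * ((A 0 0) ^ 2 + (A 0 1) ^ 2 + (A 0 2) ^ 2)
      - (η * (η + 2) / 2) * (A 0 0) ^ 2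
      + (η * (1 - η) * (1 + η) / (3 - p)) * (A 0 0) ^ 2
    ≤ (-((5 - p) * (p - 1) / (4 * (3 - p) ^ 2)) * (1 - η) ^ 2
        - ((η + 2 - p) / (4 * (3 - p))) * (1 + η) ^ 2) * (A 0 0) ^ 2 := by
  have h3 : (0:ℝ) < 3 - p := by linarith
  have hb : A 1 0 = A 0 1 := hsymm.apply 0 1
  have hc : A 2 0 = A 0 2 := hsymm.apply 0 2
  have he : A 2 1 = A 1 2 := hsymm.apply 1 2
  have hf : A 2 2 = -(1 + η) * A 0 0 - A 1 1 := by linarith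
  set a := A 0 0 with ha
  set b := A 0 1 with hb'
  set c := A 0 2 with hc'
  set d := A 1 1 with hd'
  set e := A 1 2 with he'
  have key : 0 ≤ 4*(3-p)*(p-1-2*η)*e^2 + 4*(3-p)*(1-η)*(b^2+c^2)
      + (3-p)*(p-1-2*η)*(d - (-(1+η)*a - d))^2
      - (η-p+2)*((p-3)*η^2+(10-2*p)*η+(p-7))*a^2 := by
    have h1 : (0:ℝ) ≤ 4*(3-p)*(p-1-2*η) := by nlinarith
    have h2 : (0:ℝ) ≤ 4*(3-p)*(1-η) := by nlinarith
    have h3' : (0:ℝ) ≤ (3-p)*(p-1-2*η) := by nlinarith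
    have hq : (p-3)*η^2+(10-2*p)*η+(p-7) ≤ 0 := by
      nlinarith [mul_nonneg (by linarith : (0:ℝ) ≤ 10-2*p) (by linarith : (0:ℝ) ≤ -η),
        mul_nonneg (by linarith : (0:ℝ) ≤ 3-p) (sq_nonneg η)]
    have h4 : (0:ℝ) ≤ -((η-p+2)*((p-3)*η^2+(10-2*p)*η+(p-7))) * a^2 :=
      mul_nonneg (by nlinarith [mul_nonneg (by linarith : (0:ℝ) ≤ η-p+2) (by linarith : (0:ℝ) ≤ -((p-3)*η^2+(10-2*p)*η+(p-7)))]) (sq_nonneg a)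
    nlinarith [mul_nonneg h1 (sq_nonneg e), mul_nonneg h2 (sq_nonneg b),
      mul_nonneg h2 (sq_nonneg c), mul_nonneg h3' (sq_nonneg (d - (-(1+η)*a - d)))]
  rw [Fin.sum_univ_three]
  simp only [Fin.sum_univ_three, hb, hc, he, hf]
  rw [← sub_nonneg]
  have hid : (-((5 - p) * (p - 1) / (4 * (3 - p) ^ 2)) * (1 - η) ^ 2
        - ((η + 2 - p) / (4 * (3 - p))) * (1 + η) ^ 2) * a ^ 2
      - (-((1 - η) / (3 - p) - 1 / 2) * ((a^2 + b^2 + c^2) + (b^2 + d^2 + e^2)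
          + (c^2 + e^2 + (-(1+η)*a - d)^2))
        + ((p - 2 - η) / (3 - p)) * (a^2 + b^2 + c^2)
        - (η * (η + 2) / 2) * a^2
        + (η * (1 - η) * (1 + η) / (3 - p)) * a^2)
      = (4*(3-p)*(p-1-2*η)*e^2 + 4*(3-p)*(1-η)*(b^2+c^2)
          + (3-p)*(p-1-2*η)*(d - (-(1+η)*a - d))^2
          - (η-p+2)*((p-3)*η^2+(10-2*p)*η+(p-7))*a^2) / (4*(3-p)^2) := by
    field_simp
    ring
  calc (0:ℝ) ≤ (4*(3-p)*(p-1-2*η)*e^2 + 4*(3-p)*(1-η)*(b^2+c^2)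
          + (3-p)*(p-1-2*η)*(d - (-(1+η)*a - d))^2
          - (η-p+2)*((p-3)*η^2+(10-2*p)*η+(p-7))*a^2) / (4*(3-p)^2) := by positivity
    _ = _ := by rw [← hid]
end

section
/- Let 1 < p ≤ 2, let ε > 0 and 0 < δ ≤ ε, let U ⊆ ℝ³ be open, and let u : U → ℝ be a smooth function satisfying the regularized p-harmonic equation div((‖∇u‖² + ε)^{(p-2)/2}·∇u) = 0 on U. Set v_δ = (‖∇u‖² + δ)^{1/2}. Then at every point x ∈ U with ∇u(x) ≠ 0: (i) div(v_δ·∇u) = (‖∇u‖·(‖∇u‖²+δ)^{-1/2} - (p-2)·‖∇u‖·(‖∇u‖²+δ)^{1/2}/(‖∇u‖²+ε))·⟨∇u, ∇‖∇u‖⟩; and (ii) |div(v_δ·∇u)| ≤ (3-p)·‖∇u‖·‖∇²u‖, where ‖∇²u‖ denotes the Frobenius norm of the Hessian of u. -/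
/-- The divergence of a vector field on `ℝ³`: the trace of its derivative,
computed as the sum of the partial derivatives in the standard orthonormal basis. -/
noncomputable def vectorDiv {n : ℕ} (X : EuclideanSpace ℝ (Fin n) → EuclideanSpace ℝ (Fin n))
    (x : EuclideanSpace ℝ (Fin n)) : ℝ :=
  ∑ i : Fin n, fderiv ℝ X x (EuclideanSpace.single i 1) i

/-- The Frobenius norm of the Hessian of `u : ℝ³ → ℝ` at `x`. -/
noncomputable def hessFrobeniusNorm (u : EuclideanSpace ℝ (Fin 3) → ℝ)
    (x : EuclideanSpace ℝ (Fin 3)) : ℝ :=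
  Real.sqrt (∑ i : Fin 3, ∑ j : Fin 3,
    (fderiv ℝ (gradient u) x (EuclideanSpace.single j 1) i) ^ 2)

open InnerProductSpace

lemma rda_sum_single (v : EuclideanSpace ℝ (Fin 3)) :
    v = ∑ i, v i • EuclideanSpace.single i 1 := by
  conv_lhs => rw [← (EuclideanSpace.basisFun (Fin 3) ℝ).sum_repr v]
  simp [EuclideanSpace.basisFun_apply, EuclideanSpace.basisFun_repr]

lemma rda_map_sum (gx : EuclideanSpace ℝ (Fin 3))
    (D : EuclideanSpace ℝ (Fin 3) →L[ℝ] EuclideanSpace ℝ (Fin 3)) :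
    D gx = ∑ j, gx j • D (EuclideanSpace.single j 1) := by
  conv_lhs => rw [rda_sum_single gx]
  rw [map_sum]
  exact Finset.sum_congr rfl fun i _ => by rw [map_smul]

lemma rda_apply_sum (f : Fin 3 → EuclideanSpace ℝ (Fin 3)) (i : Fin 3) :
    (∑ j, f j) i = ∑ j, f j i := by
  induction (Finset.univ : Finset (Fin 3)) using Finset.induction with
  | empty => simp
  | insert _ _ hnot ih => simp_all [Finset.sum_insert hnot]

lemma rda_vectorDiv_smul (c : EuclideanSpace ℝ (Fin 3) → ℝ)
    (g : EuclideanSpace ℝ (Fin 3) → EuclideanSpace ℝ (Fin 3))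
    (x : EuclideanSpace ℝ (Fin 3)) (c' : EuclideanSpace ℝ (Fin 3) →L[ℝ] ℝ)
    (D : EuclideanSpace ℝ (Fin 3) →L[ℝ] EuclideanSpace ℝ (Fin 3))
    (hc : HasFDerivAt c c' x) (hg : HasFDerivAt g D x) :
    vectorDiv (fun y => c y • g y) x
      = (∑ i, c' (EuclideanSpace.single i 1) * g x i)
        + c x * ∑ i, D (EuclideanSpace.single i 1) i := by
  unfold vectorDiv
  rw [(hc.fun_smul hg).fderiv, Finset.mul_sum, ← Finset.sum_add_distrib]
  refine Finset.sum_congr rfl fun i _ => ?_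
  simp [mul_comm]
  ring

lemma rda_diff_gradient (u : EuclideanSpace ℝ (Fin 3) → ℝ) (x : EuclideanSpace ℝ (Fin 3))
    (h : ContDiffAt ℝ (⊤ : ℕ∞) u x) : DifferentiableAt ℝ (gradient u) x := by
  have hdf : DifferentiableAt ℝ (fderiv ℝ u) x :=
    (h.fderiv_right (m := 1) (WithTop.coe_le_coe.mpr le_top)).differentiableAt one_ne_zero
  have hrepr : gradient u = fun y =>
      ∑ i, (fderiv ℝ u y (EuclideanSpace.single i 1)) • EuclideanSpace.single i 1 := by
    funext y
    rw [rda_sum_single (gradient u y)]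
    refine Finset.sum_congr rfl fun i _ => ?_
    congr 1
    have h2 : gradient u y i = (inner ℝ (gradient u y) (EuclideanSpace.single i (1:ℝ)) : ℝ) := by
      rw [EuclideanSpace.inner_single_right]; simp
    rw [h2]
    exact toDual_symm_apply
  rw [hrepr]
  exact DifferentiableAt.fun_sum fun i _ =>
    (hdf.clm_apply (differentiableAt_const _)).smul_const _

set_option maxHeartbeats 2000000 in
theorem regularized_divergence_estimate (p ε δ : ℝ) (hp1 : 1 < p) (hp2 : p ≤ 2)
    (hε : 0 < ε) (hδ1 : 0 < δ) (hδ2 : δ ≤ ε)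
    (U : Set (EuclideanSpace ℝ (Fin 3))) (hU : IsOpen U)
    (u : EuclideanSpace ℝ (Fin 3) → ℝ) (hsmooth : ContDiffOn ℝ (⊤ : ℕ∞) u U)
    (hreg : ∀ x ∈ U,
      vectorDiv (fun y => ((‖gradient u y‖ ^ 2 + ε) ^ ((p - 2) / 2)) • gradient u y) x = 0)
    (vδ : EuclideanSpace ℝ (Fin 3) → ℝ)
    (hvδ : ∀ x, vδ x = (‖gradient u x‖ ^ 2 + δ) ^ ((1 : ℝ) / 2)) :
    ∀ x ∈ U, gradient u x ≠ 0 →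
      (vectorDiv (fun y => vδ y • gradient u y) x
        = (‖gradient u x‖ * (‖gradient u x‖ ^ 2 + δ) ^ (-(1 : ℝ) / 2)
            - (p - 2) * ‖gradient u x‖ * (‖gradient u x‖ ^ 2 + δ) ^ ((1 : ℝ) / 2)
                / (‖gradient u x‖ ^ 2 + ε))
          * (inner ℝ (gradient u x) (gradient (fun y => ‖gradient u y‖) x) : ℝ)) ∧
      |vectorDiv (fun y => vδ y • gradient u y) x|
        ≤ (3 - p) * ‖gradient u x‖ * hessFrobeniusNorm u x := by
  intro x hx hgx
  have hcd : ContDiffAt ℝ (⊤ : ℕ∞) u x := hsmooth.contDiffAt (hU.mem_nhds hx)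
  have hdg : DifferentiableAt ℝ (gradient u) x := rda_diff_gradient u x hcd
  set D := fderiv ℝ (gradient u) x with hDdef
  have hD : HasFDerivAt (gradient u) D x := hdg.hasFDerivAt
  set gx := gradient u x with hgxdef
  set n := ‖gx‖ with hndef
  have hn : 0 < n := norm_pos_iff.mpr hgx
  set S : ℝ := ∑ i, (inner ℝ gx (D (EuclideanSpace.single i 1)) : ℝ) * gx i with hSdef
  set T : ℝ := ∑ i, (D (EuclideanSpace.single i 1)) i with hTdef
  set Bδ : ℝ := n ^ 2 + δ with hBδdef
  set Aε : ℝ := n ^ 2 + ε with hAεdef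
  have hBδ : (0:ℝ) < Bδ := by positivity
  have hAε : (0:ℝ) < Aε := by positivity
  -- derivative of y ↦ (‖∇u y‖² + c)^α
  have hφ : ∀ (c α : ℝ), 0 < c → HasFDerivAt (fun y => (‖gradient u y‖ ^ 2 + c) ^ α)
      ((α * (n ^ 2 + c) ^ (α - 1)) • ((2:ℕ) • (innerSL ℝ gx).comp D)) x := by
    intro c α hc
    have h1 : HasFDerivAt (fun y => ‖gradient u y‖ ^ 2 + c)
        ((2:ℕ) • (innerSL ℝ gx).comp D) x := hD.norm_sq.add_const c
    exact h1.rpow_const (p := α) (Or.inl (by positivity))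
  -- generic divergence formula
  have hdivgen : ∀ (c α : ℝ), 0 < c →
      vectorDiv (fun y => ((‖gradient u y‖ ^ 2 + c) ^ α) • gradient u y) x
        = α * (n ^ 2 + c) ^ (α - 1) * 2 * S + (n ^ 2 + c) ^ α * T := by
    intro c α hc
    rw [rda_vectorDiv_smul _ _ x _ D (hφ c α hc) hD]
    congr 1
    rw [hSdef, Finset.mul_sum]
    refine Finset.sum_congr rfl fun i _ => ?_
    simp [mul_comm]
    ring
  -- the equation, and solving for T
  have heq : (p - 2) / 2 * Aε ^ ((p - 2) / 2 - 1) * 2 * S + Aε ^ ((p - 2) / 2) * T = 0 := by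
    have := hreg x hx
    rwa [hdivgen ε ((p - 2) / 2) hε] at this
  have hCε : (0:ℝ) < Aε ^ ((p - 2) / 2) := Real.rpow_pos_of_pos hAε _
  have hT : T = -((p - 2) * S / Aε) := by
    rw [Real.rpow_sub hAε, Real.rpow_one] at heq
    have h2 : Aε ^ ((p - 2) / 2) * ((p - 2) * S / Aε + T) = 0 := by
      field_simp at heq ⊢
      linarith [heq]
    have h3 := (mul_eq_zero.mp h2).resolve_left (ne_of_gt hCε)
    linarith [h3]
  -- the divergence of v_δ ∇u
  have hfuneq : (fun y => vδ y • gradient u y)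
      = fun y => ((‖gradient u y‖ ^ 2 + δ) ^ ((1:ℝ)/2)) • gradient u y :=
    funext fun y => by rw [hvδ]
  have hdiv : vectorDiv (fun y => vδ y • gradient u y) x
      = Bδ ^ (-(1:ℝ)/2) * S - (p - 2) * Bδ ^ ((1:ℝ)/2) * S / Aε := by
    rw [hfuneq, hdivgen δ ((1:ℝ)/2) hδ1, hT]
    rw [show ((1:ℝ)/2 - 1) = -(1:ℝ)/2 by norm_num]
    ring
  -- inner product with the gradient of the norm
  have hDgx : (inner ℝ gx (D gx) : ℝ) = S := by
    rw [rda_map_sum gx D, inner_sum]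
    exact Finset.sum_congr rfl fun i _ => by rw [real_inner_smul_right]; ring
  have hsqrtD : HasFDerivAt (fun y => ‖gradient u y‖)
      ((1/(2*Real.sqrt (n ^ 2))) • ((2:ℕ) • (innerSL ℝ gx).comp D)) x := by
    have h1 : (fun y => ‖gradient u y‖) = fun y => Real.sqrt (‖gradient u y‖ ^ 2) :=
      funext fun y => (Real.sqrt_sq (norm_nonneg _)).symm
    rw [h1]
    exact hD.norm_sq.sqrt (ne_of_gt (pow_pos hn 2))
  have hgradnorm : (inner ℝ gx (gradient (fun y => ‖gradient u y‖) x) : ℝ) = S / n := by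
    rw [hsqrtD.hasGradientAt.gradient, real_inner_comm, toDual_symm_apply]
    have : ((1/(2*Real.sqrt (n ^ 2))) • ((2:ℕ) • (innerSL ℝ gx).comp D)) gx
        = (1/(2*n)) * (2 * (inner ℝ gx (D gx) : ℝ)) := by
      rw [Real.sqrt_sq hn.le]
      simp [mul_comm]
    rw [this, hDgx]
    field_simp
  refine ⟨?_, ?_⟩
  · rw [hdiv, hgradnorm]
    field_simp
  · -- part (ii)
    set H := hessFrobeniusNorm u x with hHdef
    have hHnn : 0 ≤ H := Real.sqrt_nonneg _
    have hHsq : H ^ 2 = ∑ i : Fin 3, ∑ j : Fin 3,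
        ((D (EuclideanSpace.single j 1)) i) ^ 2 := by
      rw [hHdef]
      unfold hessFrobeniusNorm
      rw [Real.sq_sqrt (by positivity)]
    have hn2 : n ^ 2 = ∑ j, gx j ^ 2 := by
      have h1 : n = Real.sqrt (∑ j, gx j ^ 2) := by
        rw [hndef, EuclideanSpace.norm_eq]
        congr 1
        exact Finset.sum_congr rfl fun j _ => by rw [Real.norm_eq_abs, sq_abs]
      rw [h1, Real.sq_sqrt (by positivity)]
    -- ‖D gx‖ ≤ n * H
    have hDgxnorm : ‖D gx‖ ≤ n * H := by
      have hcoord : ∀ i, (D gx) i = ∑ j, gx j * (D (EuclideanSpace.single j 1)) i := by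
        intro i
        rw [rda_map_sum gx D, rda_apply_sum]
        exact Finset.sum_congr rfl fun j _ => rfl
      have hsum : ∑ i : Fin 3, ((D gx) i) ^ 2 ≤ n ^ 2 * H ^ 2 := by
        rw [hHsq, Finset.mul_sum]
        refine Finset.sum_le_sum fun i _ => ?_
        rw [hcoord i]
        calc (∑ j, gx j * (D (EuclideanSpace.single j 1)) i) ^ 2
            ≤ (∑ j, gx j ^ 2) * ∑ j, ((D (EuclideanSpace.single j 1)) i) ^ 2 :=
              Finset.sum_mul_sq_le_sq_mul_sq _ _ _
          _ = n ^ 2 * ∑ j, ((D (EuclideanSpace.single j 1)) i) ^ 2 := by rw [← hn2]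
      have h1 : ‖D gx‖ = Real.sqrt (∑ i : Fin 3, ((D gx) i) ^ 2) := by
        rw [EuclideanSpace.norm_eq]
        congr 1
        exact Finset.sum_congr rfl fun i _ => by rw [Real.norm_eq_abs, sq_abs]
      rw [h1]
      calc Real.sqrt (∑ i : Fin 3, ((D gx) i) ^ 2) ≤ Real.sqrt (n ^ 2 * H ^ 2) :=
            Real.sqrt_le_sqrt hsum
        _ = n * H := by
            rw [show n ^ 2 * H ^ 2 = (n * H) ^ 2 by ring, Real.sqrt_sq (by positivity)]
    have hSb : |S| ≤ n ^ 2 * H := by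
      calc |S| = |(inner ℝ gx (D gx) : ℝ)| := by rw [hDgx]
        _ ≤ n * ‖D gx‖ := abs_real_inner_le_norm gx (D gx)
        _ ≤ n * (n * H) := by
            exact mul_le_mul_of_nonneg_left hDgxnorm hn.le
        _ = n ^ 2 * H := by ring
    -- coefficient bounds
    have hnle : n ≤ Bδ ^ ((1:ℝ)/2) := by
      have h1 : ((n:ℝ) ^ 2) ^ ((1:ℝ)/2) = n := by
        rw [← Real.rpow_natCast n 2, ← Real.rpow_mul hn.le]
        norm_num
      calc n = ((n:ℝ) ^ 2) ^ ((1:ℝ)/2) := h1.symm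
        _ ≤ Bδ ^ ((1:ℝ)/2) :=
            Real.rpow_le_rpow (by positivity) (by rw [hBδdef]; linarith) (by norm_num)
    have hBle : Bδ ^ ((1:ℝ)/2) ≤ Aε ^ ((1:ℝ)/2) :=
      Real.rpow_le_rpow hBδ.le (by rw [hBδdef, hAεdef]; linarith) (by norm_num)
    have hAhalf : Aε ^ ((1:ℝ)/2) * Aε ^ ((1:ℝ)/2) = Aε := by
      rw [← Real.rpow_add hAε]
      norm_num
    have hBhalfpos : (0:ℝ) < Bδ ^ ((1:ℝ)/2) := Real.rpow_pos_of_pos hBδ _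
    have hinv : Bδ ^ (-(1:ℝ)/2) = (Bδ ^ ((1:ℝ)/2))⁻¹ := by
      rw [show (-(1:ℝ)/2) = -((1:ℝ)/2) by norm_num, Real.rpow_neg hBδ.le]
    have hc1 : n * Bδ ^ (-(1:ℝ)/2) ≤ 1 := by
      rw [hinv, ← div_eq_mul_inv]
      rw [div_le_one hBhalfpos]
      exact hnle
    have hc2 : n * Bδ ^ ((1:ℝ)/2) ≤ Aε := by
      calc n * Bδ ^ ((1:ℝ)/2) ≤ (Aε ^ ((1:ℝ)/2)) * (Aε ^ ((1:ℝ)/2)) :=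
            mul_le_mul (hnle.trans hBle) hBle hBhalfpos.le (by positivity)
        _ = Aε := hAhalf
    have hc3 : (2 - p) * (n * Bδ ^ ((1:ℝ)/2)) / Aε ≤ 2 - p := by
      rw [div_le_iff₀ hAε]
      exact mul_le_mul_of_nonneg_left hc2 (by linarith)
    -- final estimate
    rw [hdiv]
    have hrw : Bδ ^ (-(1:ℝ)/2) * S - (p - 2) * Bδ ^ ((1:ℝ)/2) * S / Aε
        = (Bδ ^ (-(1:ℝ)/2) + (2 - p) * Bδ ^ ((1:ℝ)/2) / Aε) * S := by
      ring
    rw [hrw, abs_mul]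
    have hcoefnn : 0 ≤ Bδ ^ (-(1:ℝ)/2) + (2 - p) * Bδ ^ ((1:ℝ)/2) / Aε := by
      have : (0:ℝ) ≤ (2 - p) * Bδ ^ ((1:ℝ)/2) / Aε := by
        apply div_nonneg _ hAε.le
        exact mul_nonneg (by linarith) hBhalfpos.le
      have h0 : (0:ℝ) < Bδ ^ (-(1:ℝ)/2) := Real.rpow_pos_of_pos hBδ _
      linarith
    rw [abs_of_nonneg hcoefnn]
    have hcoefle : n * (Bδ ^ (-(1:ℝ)/2) + (2 - p) * Bδ ^ ((1:ℝ)/2) / Aε) ≤ 3 - p := by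
      have h4 : n * ((2 - p) * Bδ ^ ((1:ℝ)/2) / Aε) = (2 - p) * (n * Bδ ^ ((1:ℝ)/2)) / Aε := by
        ring
      calc n * (Bδ ^ (-(1:ℝ)/2) + (2 - p) * Bδ ^ ((1:ℝ)/2) / Aε)
          = n * Bδ ^ (-(1:ℝ)/2) + (2 - p) * (n * Bδ ^ ((1:ℝ)/2)) / Aε := by ring
        _ ≤ 1 + (2 - p) := add_le_add hc1 hc3
        _ = 3 - p := by ring
    calc (Bδ ^ (-(1:ℝ)/2) + (2 - p) * Bδ ^ ((1:ℝ)/2) / Aε) * |S|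
        ≤ (Bδ ^ (-(1:ℝ)/2) + (2 - p) * Bδ ^ ((1:ℝ)/2) / Aε) * (n ^ 2 * H) :=
          mul_le_mul_of_nonneg_left hSb hcoefnn
      _ = (n * (Bδ ^ (-(1:ℝ)/2) + (2 - p) * Bδ ^ ((1:ℝ)/2) / Aε)) * (n * H) := by ring
      _ ≤ (3 - p) * (n * H) := mul_le_mul_of_nonneg_right hcoefle (mul_nonneg hn.le hHnn)
      _ = (3 - p) * n * H := by ring
end
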